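/- Let [{s₁}|{t₁}] and [{s₂}|{t₂}] be elements of B₁. Then [{s₁}|{t₁}] ⋆ [{s₂}|{t₂}] equals: x_{s₁}[{s₂}|{t₂,t₁}] + x_{t₂}[{s₁,s₂}|{t₁}] if t₁ > t₂ and s₁ < s₂; x_{s₁}[{s₂}|{t₂,t₁}] if t₁ > t₂ and s₁ = s₂; x_{s₁}[{s₂}|{t₂,t₁}] − x_{t₂}[{s₂,s₁}|{t₁}] if t₁ > t₂ and s₁ > s₂; x_{t₁}[{s₁,s₂}|{t₂}] if t₁ = t₂ and s₁ < s₂; 0 if t₁ = t₂ and s₁ = s₂; −x_{t₂}[{s₂,s₁}|{t₁}] if t₁ = t₂ and s₁ > s₂; x_{t₁}[{s₁,s₂}|{t₂}] − x_{s₂}[{s₁}|{t₁,t₂}] if t₁ < t₂ and s₁ < s₂; −x_{s₂}[{s₁}|{t₁,t₂}] if t₁ < t₂ and s₁ = s₂; −x_{s₂}[{s₁}|{t₁,t₂}] − x_{t₁}[{s₂,s₁}|{t₂}] if t₁ < t₂ and s₁ > s₂. In particular, all symbols appearing on the right-hand sides are genuine elements of B₂. -/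

import Mathlib

open Classical MvPolynomial Finsupp TensorProduct

set_option maxHeartbeats 1600000

noncomputable section

namespace EdgeRes

/-- A "cell" `(σ, τ)`: a pair of finite sets of vertices, representing the symbol `[σ|τ]`. -/
abbrev Cell (n : ℕ) := Finset (Fin n) × Finset (Fin n)

/-- The cointerval graph of the intervals `[a i, b i]`: distinct vertices are adjacent
iff the corresponding closed intervals are disjoint. -/
def cigraph (n : ℕ) (a b : Fin n → ℝ) : SimpleGraph (Fin n) where
  Adj i j := i ≠ j ∧ Disjoint (Set.Icc (a i) (b i)) (Set.Icc (a j) (b j))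
  symm := by constructor; intro i j h; exact ⟨h.1.symm, h.2.symm⟩
  loopless := by constructor; intro i h; exact h.1 rfl

variable {n : ℕ}

/-- The homological degree of a cell: `|σ| + |τ| - 1`. -/
def cellDeg (e : Cell n) : ℕ := e.1.card + e.2.card - 1

/-- `e = (σ, τ)` is a basis cell: either the degree-0 cell `(∅, ∅)` (representing `1 ∈ B₀`),
or `σ, τ` are disjoint and nonempty, `max σ < min τ`, and every `i ∈ σ` is adjacent
to `min τ` in `G`. -/
def IsBasisCell (G : SimpleGraph (Fin n)) (e : Cell n) : Prop :=
  e = (∅, ∅) ∨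
  (e.1.Nonempty ∧ e.2.Nonempty ∧ Disjoint e.1 e.2 ∧
   (∀ i ∈ e.1, ∀ j ∈ e.2, i < j) ∧
   (∀ i ∈ e.1, ∀ j ∈ e.2, (∀ j' ∈ e.2, j ≤ j') → G.Adj i j))

/-- `e ∈ B_d`. -/
def InB (G : SimpleGraph (Fin n)) (d : ℕ) (e : Cell n) : Prop :=
  IsBasisCell G e ∧ cellDeg e = d

/-- The underlying module of the resolution: the free `S`-module on all cells (the
resolution `F` is the submodule family spanned by the basis cells of each degree). -/
abbrev Ftot (n : ℕ) (k : Type) [Field k] := Cell n →₀ MvPolynomial (Fin n) k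

variable (G : SimpleGraph (Fin n)) (k : Type) [Field k]

/-- The basis vector corresponding to a cell, where symbols that are not genuine
basis elements are interpreted as `0`. -/
def sym (e : Cell n) : Ftot n k :=
  if IsBasisCell G e then Finsupp.single e 1 else 0

/-- The differential on a basis cell: `d[{i}|{j}] = x_i x_j`, and for `|σ|+|τ| ≥ 3`,
`d[σ|τ] = Σ_{i∈σ} (−1)^{|τ|+|{j∈σ : j>i}|} x_i [σ∖i|τ] + Σ_{i∈τ} (−1)^{|{j∈τ : j>i}|} x_i [σ|τ∖i]`. -/
def diffCell (e : Cell n) : Ftot n k :=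
  if IsBasisCell G e then
    if e.1.card + e.2.card = 2 then
      (∏ i ∈ e.1 ∪ e.2, (X i : MvPolynomial (Fin n) k)) • sym G k ((∅, ∅) : Cell n)
    else if 3 ≤ e.1.card + e.2.card then
      (∑ i ∈ e.1,
        (((-1 : MvPolynomial (Fin n) k) ^ (e.2.card + (e.1.filter fun j => i < j).card)) * X i) •
          sym G k (e.1.erase i, e.2))
      + (∑ i ∈ e.2,
        (((-1 : MvPolynomial (Fin n) k) ^ ((e.2.filter fun j => i < j).card)) * X i) •
          sym G k (e.1, e.2.erase i))
    else 0
  else 0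

/-- The differential, as an `S`-linear endomorphism of the total module (it is zero in
degree `0` and on non-basis cells). -/
def Dmap : Ftot n k →ₗ[MvPolynomial (Fin n) k] Ftot n k :=
  Finsupp.lsum ℕ fun e => LinearMap.smulRight LinearMap.id (diffCell G k e)

/-- The submodule `F_d`: the span of the basis cells in `B_d`.  (`F` is the direct sum of
these, and `F_0 = S·[∅|∅] ≅ S`.) -/
def Fsub (d : ℕ) : Submodule (MvPolynomial (Fin n) k) (Ftot n k) :=
  Submodule.span _ {f : Ftot n k | ∃ e : Cell n, InB G d e ∧ f = Finsupp.single e 1}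

/-- The edge ideal `I_G`, generated by the `x_i x_j` for edges `ij` of `G`. -/
def edgeIdeal : Ideal (MvPolynomial (Fin n) k) :=
  Ideal.span {m | ∃ i j : Fin n, G.Adj i j ∧ m = X i * X j}

/-- The irrelevant maximal ideal `(x_1, …, x_n)`. -/
def irrIdeal (n : ℕ) (k : Type) [Field k] : Ideal (MvPolynomial (Fin n) k) :=
  Ideal.span (Set.range fun i : Fin n => (X i : MvPolynomial (Fin n) k))

/-- The set of pairs `(i, j)` with `i < j`, `ij ∈ E(G)`, and `x_i x_j ∣ x^α`; i.e. the
elements `[{i}|{j}]` of `B₁` whose monomial divides `x^α`. -/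
def DvdSet (α : Fin n →₀ ℕ) : Finset (Fin n × Fin n) :=
  Finset.univ.filter fun p => p.1 < p.2 ∧ G.Adj p.1 p.2 ∧ 1 ≤ α p.1 ∧ 1 ≤ α p.2

/-- `c` on a monomial `x^α ∈ F_0 = S`: zero if `x^α ∉ I_G`; otherwise
`(x^α/(x_i x_j))·[{i}|{j}]` for the `≺`-minimal `[{i}|{j}] ∈ B₁` with `x_i x_j ∣ x^α`
(i.e. `j` is largest possible and then `i` smallest possible). -/
def cZero (α : Fin n →₀ ℕ) : Ftot n k :=
  if h : (DvdSet G α).Nonempty then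
    let t := ((DvdSet G α).image Prod.snd).max' (h.image _)
    if h2 : ((((DvdSet G α).filter fun p => p.2 = t)).image Prod.fst).Nonempty then
      let s := ((((DvdSet G α).filter fun p => p.2 = t)).image Prod.fst).min' h2
      (monomial (α - Finsupp.single s 1 - Finsupp.single t 1) (1 : k)) • sym G k ({s}, {t})
    else 0
  else 0

/-- `C₁ = {i ∈ supp α : i > max τ}`. -/
def C1set (τ : Finset (Fin n)) (α : Fin n →₀ ℕ) : Finset (Fin n) :=
  α.support.filter fun i => ∀ j ∈ τ, j < i

/-- `C₂ = {i ∈ supp α : i < min σ, {i, min τ} ∈ E(G)}`. -/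
def C2set (σ τ : Finset (Fin n)) (α : Fin n →₀ ℕ) : Finset (Fin n) :=
  α.support.filter fun i =>
    (∀ s ∈ σ, i < s) ∧ ∀ j ∈ τ, (∀ j' ∈ τ, j ≤ j') → G.Adj i j

/-- `C₃ = {i ∈ supp α : i < min σ, i < max supp α, {i, max supp α} ∈ E(G)}`. -/
def C3set (σ : Finset (Fin n)) (α : Fin n →₀ ℕ) : Finset (Fin n) :=
  α.support.filter fun i =>
    (∀ s ∈ σ, i < s) ∧ ∀ m ∈ α.support, (∀ m' ∈ α.support, m' ≤ m) → (i < m ∧ G.Adj i m)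

/-- The value of the contracting homotopy `c` on the `k`-basis vector `x^α·e`. -/
def cMono (e : Cell n) (α : Fin n →₀ ℕ) : Ftot n k :=
  if IsBasisCell G e then
    if hτ : e.2.Nonempty then
      if e.2.card = 1 then
        -- `τ = {t}`
        let t := e.2.max' hτ
        if h1 : (C1set e.2 α).Nonempty then
          let m1 := (C1set e.2 α).max' h1
          (monomial (α - Finsupp.single m1 1) (1 : k)) • sym G k (e.1, insert m1 e.2)
          + (if h3 : (C3set G e.1 α).Nonempty then
              let m3 := (C3set G e.1 α).min' h3
              ((-1 : MvPolynomial (Fin n) k) ^ (e.1.card + 1)) •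
                ((monomial (α + Finsupp.single t 1 - Finsupp.single m1 1 - Finsupp.single m3 1)
                    (1 : k)) • sym G k (insert m3 e.1, ({m1} : Finset (Fin n))))
            else 0)
        else
          if h2 : (C2set G e.1 e.2 α).Nonempty then
            let m2 := (C2set G e.1 e.2 α).min' h2
            ((-1 : MvPolynomial (Fin n) k) ^ (e.1.card + 1)) •
              ((monomial (α - Finsupp.single m2 1) (1 : k)) • sym G k (insert m2 e.1, e.2))
          else 0
      else
        -- `|τ| ≥ 2`
        if h1 : (C1set e.2 α).Nonempty then
          let m1 := (C1set e.2 α).max' h1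
          (monomial (α - Finsupp.single m1 1) (1 : k)) • sym G k (e.1, insert m1 e.2)
        else 0
    else cZero G k α  -- the degree-0 basis cell `(∅, ∅)`
  else 0

/-- The `k`-basis of the total module, indexed by pairs (cell, monomial exponent). -/
def FBasis (n : ℕ) (k : Type) [Field k] :
    Module.Basis ((_ : Cell n) × (Fin n →₀ ℕ)) k (Ftot n k) :=
  Finsupp.basis fun _ => MvPolynomial.basisMonomials (Fin n) k

/-- The contracting homotopy `c`, as a `k`-linear endomorphism of the total module. -/
def Cmap : Ftot n k →ₗ[k] Ftot n k :=
  (FBasis n k).constr ℕ fun p => cMono G k p.1 p.2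

/-- The `S`-bilinear extension of a map defined on pairs of cells. -/
def biext (b : Cell n → Cell n → Ftot n k) (f g : Ftot n k) : Ftot n k :=
  ∑ e₁ ∈ f.support, ∑ e₂ ∈ g.support, (f e₁ * g e₂) • b e₁ e₂

/-- The product of two basis cells, defined recursively (with fuel, which suffices as each
recursive step lowers the total degree): `1 ⋆ 1 = 1`, and for `p + q ≥ 1`,
`e₁ ⋆ e₂ = c((d e₁) ⋆ e₂) + (−1)^p c(e₁ ⋆ (d e₂))`. -/
def bstar : ℕ → Cell n → Cell n → Ftot n k
  | 0, _, _ => 0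
  | N + 1, e₁, e₂ =>
    if cellDeg e₁ + cellDeg e₂ = 0 then Finsupp.single ((∅, ∅) : Cell n) 1
    else
      Cmap G k (biext k (fun a b => bstar N a b) (Dmap G k (Finsupp.single e₁ 1)) (Finsupp.single e₂ 1))
      + ((-1 : MvPolynomial (Fin n) k) ^ cellDeg e₁) •
          Cmap G k (biext k (fun a b => bstar N a b) (Finsupp.single e₁ 1) (Dmap G k (Finsupp.single e₂ 1)))

/-- The product `⋆` on the resolution, extended `S`-bilinearly from basis cells. -/
def pstar (f g : Ftot n k) : Ftot n k := biext k (bstar G k (4 * n + 4)) f g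

/-- The map `∂` on a basis cell: `∂[{i}|{j}] = x_i x_j`, and for `|σ|+|τ| ≥ 3`,
`∂[σ|τ] = x_{max τ}[σ|τ∖max τ] − (−1)^{|τ|+|σ|} x_{min σ}[σ∖min σ|τ]`. -/
def partialCell (e : Cell n) : Ftot n k :=
  if IsBasisCell G e then
    if e.1.card + e.2.card = 2 then
      (∏ i ∈ e.1 ∪ e.2, (X i : MvPolynomial (Fin n) k)) • sym G k ((∅, ∅) : Cell n)
    else if 3 ≤ e.1.card + e.2.card then
      if h1 : e.1.Nonempty then
        if h2 : e.2.Nonempty then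
          (X (e.2.max' h2) : MvPolynomial (Fin n) k) • sym G k (e.1, e.2.erase (e.2.max' h2))
          - ((-1 : MvPolynomial (Fin n) k) ^ (e.2.card + e.1.card)) •
              ((X (e.1.min' h1) : MvPolynomial (Fin n) k) •
                sym G k (e.1.erase (e.1.min' h1), e.2))
        else 0
      else 0
    else 0
  else 0

/-- The map `∂`, as an `S`-linear endomorphism of the total module. -/
def Pmap : Ftot n k →ₗ[MvPolynomial (Fin n) k] Ftot n k :=
  Finsupp.lsum ℕ fun e => LinearMap.smulRight LinearMap.id (partialCell G k e)

/-- The `k`-linear projection `π` of `S` fixing each monomial not in `I_G` and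
annihilating each monomial in `I_G`. -/
def piMap : MvPolynomial (Fin n) k →ₗ[k] MvPolynomial (Fin n) k :=
  (MvPolynomial.basisMonomials (Fin n) k).constr ℕ fun α =>
    if monomial α (1 : k) ∈ edgeIdeal G k then 0 else monomial α (1 : k)

/-- The `ℕⁿ`-multidegree of the basis vector `x^α [σ|τ]`: `α + Σ_{i ∈ σ∪τ} eᵢ`. -/
def mdeg (e : Cell n) (α : Fin n →₀ ℕ) : Fin n →₀ ℕ :=
  α + ∑ i ∈ e.1 ∪ e.2, Finsupp.single i 1

/-- The `μ`-homogeneous component of the resolution (as a `k`-subspace). -/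
def Hsub (μ : Fin n →₀ ℕ) : Submodule k (Ftot n k) :=
  Submodule.span k {f : Ftot n k |
    ∃ (e : Cell n) (α : Fin n →₀ ℕ), IsBasisCell G e ∧ mdeg e α = μ ∧
      f = Finsupp.single e (monomial α (1 : k))}

/-!
Since `1 ⋆ e = e ⋆ 1 = c(d e) = e` for `e = [{s}|{t}] ∈ B₁`, the recursion in degree one
collapses to `e₁ ⋆ e₂ = c(x_{s₁} x_{t₁} e₂) - c(x_{s₂} x_{t₂} e₁)`. Each term is one application
of `c` to `x_u x_v [{s}|{t}]` with `uv` an edge: the set `C₁` contributes `x_u [{s}|{t,v}]` exactly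
when `t < v`, and `C₃` (if `t < v`) or `C₂` (if `v ≤ t`) contributes the cell `[{u,s}|{max t v}]`
exactly when `u < s`. The cointerval structure enters only through the fact that for adjacent
`s < t` we have `b_s < a_t ≤ a_{t'}`, so `s` is adjacent to every `t' ≥ t`; this supplies all
adjacencies the computation and the membership in `B₂` need.
-/

variable {G k}

lemma isBasisCell_empty : IsBasisCell G ((∅, ∅) : Cell n) := Or.inl rfl

lemma isBasisCell_singleton_singleton {s t : Fin n} (hst : s < t) (hadj : G.Adj s t) :
    IsBasisCell G (({s}, {t}) : Cell n) :=
  Or.inr ⟨by simp, by simp, by simpa using hst.ne, by simpa using hst, by simpa using hadj⟩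

lemma isBasisCell_pair_singleton {u s t : Fin n} (hus : u < s) (hst : s < t)
    (hadju : G.Adj u t) (hadjs : G.Adj s t) :
    IsBasisCell G (({u, s}, {t}) : Cell n) :=
  Or.inr ⟨by simp, by simp, by simp [(hus.trans hst).ne', hst.ne'], by simp [hus.trans hst, hst],
    by simp [hadju, hadjs]⟩

lemma isBasisCell_singleton_pair {s t v : Fin n} (hst : s < t) (htv : t < v) (hadj : G.Adj s t) :
    IsBasisCell G (({s}, {t, v}) : Cell n) :=
  Or.inr ⟨by simp, by simp, by simp [hst.ne, (hst.trans htv).ne], by simp [hst, hst.trans htv],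
    by simp [hadj, htv.not_ge]⟩

lemma inB_pair_singleton {u s t : Fin n} (hus : u < s) (hst : s < t)
    (hadju : G.Adj u t) (hadjs : G.Adj s t) :
    InB G 2 (({u, s}, {t}) : Cell n) :=
  ⟨isBasisCell_pair_singleton hus hst hadju hadjs, by simp [cellDeg, hus.ne]⟩

lemma inB_singleton_pair {s t v : Fin n} (hst : s < t) (htv : t < v) (hadj : G.Adj s t) :
    InB G 2 (({s}, {t, v}) : Cell n) :=
  ⟨isBasisCell_singleton_pair hst htv hadj, by simp [cellDeg, htv.ne]⟩

lemma smul_sym_of_isBasisCell {e : Cell n} (he : IsBasisCell G e) (p : MvPolynomial (Fin n) k) :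
    p • sym G k e = Finsupp.single e p := by
  rw [sym, if_pos he, Finsupp.smul_single_one]

lemma diffCell_empty : diffCell G k ((∅, ∅) : Cell n) = 0 := by
  simp [diffCell]

lemma diffCell_singleton_singleton {s t : Fin n} (hst : s < t) (hadj : G.Adj s t) :
    diffCell G k (({s}, {t}) : Cell n) = Finsupp.single (∅, ∅) (X s * X t) := by
  simp [diffCell, isBasisCell_singleton_singleton hst hadj, Finset.prod_pair hst.ne,
    smul_sym_of_isBasisCell isBasisCell_empty]

lemma Dmap_single (e : Cell n) (p : MvPolynomial (Fin n) k) :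
    Dmap G k (Finsupp.single e p) = p • diffCell G k e := by
  rw [Dmap, Finsupp.lsum_single, LinearMap.smulRight_apply, LinearMap.id_apply]

lemma Cmap_single_monomial (e : Cell n) (α : Fin n →₀ ℕ) :
    Cmap G k (Finsupp.single e (monomial α 1)) = cMono G k e α := by
  have hbasis : FBasis n k ⟨e, α⟩ = Finsupp.single e (monomial α 1) := by
    simp [FBasis, coe_basisMonomials]
  rw [Cmap, ← hbasis, Module.Basis.constr_basis]

lemma biext_single_single (f : Cell n → Cell n → Ftot n k) (e₁ e₂ : Cell n)
    (p q : MvPolynomial (Fin n) k) :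
    biext k f (Finsupp.single e₁ p) (Finsupp.single e₂ q) = (p * q) • f e₁ e₂ := by
  rcases eq_or_ne p 0 with rfl | hp
  · simp [biext]
  rcases eq_or_ne q 0 with rfl | hq
  · simp [biext]
  simp [biext, Finsupp.support_single _ hp, Finsupp.support_single _ hq]

lemma biext_zero_left (f : Cell n → Cell n → Ftot n k) (g : Ftot n k) : biext k f 0 g = 0 := by
  simp [biext]

lemma biext_zero_right (f : Cell n → Cell n → Ftot n k) (g : Ftot n k) : biext k f g 0 = 0 := by
  simp [biext]

lemma X_mul_X_eq_monomial (s t : Fin n) :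
    (X s * X t : MvPolynomial (Fin n) k) =
      monomial (Finsupp.single s 1 + Finsupp.single t 1) 1 := by
  rw [X, X, monomial_mul, mul_one]

lemma DvdSet_single_add_single {u v : Fin n} (huv : u < v) (hadj : G.Adj u v) :
    DvdSet G (Finsupp.single u 1 + Finsupp.single v 1) = {(u, v)} := by
  ext ⟨i, j⟩
  simp only [DvdSet, Finset.mem_filter, Finset.mem_univ, true_and, Finset.mem_singleton,
    Prod.mk.injEq, Finsupp.add_apply, Finsupp.single_apply]
  constructor
  · rintro ⟨hij, -, hi, hj⟩
    split_ifs at hi hj <;> subst_vars <;> omega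
  · rintro ⟨rfl, rfl⟩
    simp [huv, hadj, huv.ne]

lemma cZero_single_add_single {u v : Fin n} (huv : u < v) (hadj : G.Adj u v) :
    cZero G k (Finsupp.single u 1 + Finsupp.single v 1) = Finsupp.single ({u}, {v}) 1 := by
  simp [cZero, DvdSet_single_add_single huv hadj, Finset.filter_singleton,
    smul_sym_of_isBasisCell (isBasisCell_singleton_singleton huv hadj)]

lemma bstar_empty_singleton_singleton {s t : Fin n} (hst : s < t) (hadj : G.Adj s t) (N : ℕ) :
    bstar G k (N + 2) (∅, ∅) ({s}, {t}) = Finsupp.single ({s}, {t}) 1 := by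
  simp [bstar, cellDeg, Dmap_single, diffCell_empty, diffCell_singleton_singleton hst hadj,
    biext_zero_left, biext_single_single, X_mul_X_eq_monomial,
    Cmap_single_monomial, cMono, isBasisCell_empty, cZero_single_add_single hst hadj]

lemma bstar_singleton_singleton_empty {s t : Fin n} (hst : s < t) (hadj : G.Adj s t) (N : ℕ) :
    bstar G k (N + 2) ({s}, {t}) (∅, ∅) = Finsupp.single ({s}, {t}) 1 := by
  simp [bstar, cellDeg, Dmap_single, diffCell_empty, diffCell_singleton_singleton hst hadj,
    biext_zero_right, biext_single_single, X_mul_X_eq_monomial,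
    Cmap_single_monomial, cMono, isBasisCell_empty, cZero_single_add_single hst hadj]

lemma pstar_single_single_eq_cMono_sub_cMono {s₁ t₁ s₂ t₂ : Fin n}
    (hst₁ : s₁ < t₁) (hadj₁ : G.Adj s₁ t₁) (hst₂ : s₂ < t₂) (hadj₂ : G.Adj s₂ t₂) :
    pstar G k (Finsupp.single ({s₁}, {t₁}) 1) (Finsupp.single ({s₂}, {t₂}) 1) =
      cMono G k ({s₂}, {t₂}) (Finsupp.single s₁ 1 + Finsupp.single t₁ 1)
        - cMono G k ({s₁}, {t₁}) (Finsupp.single s₂ 1 + Finsupp.single t₂ 1) := by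
  rw [pstar, biext_single_single, one_mul, one_smul, show 4 * n + 4 = 4 * n + 1 + 2 + 1 by ring,
    bstar, if_neg (by simp [cellDeg])]
  simp [Dmap_single, diffCell_singleton_singleton, hst₁, hadj₁, hst₂, hadj₂, biext_single_single,
    bstar_empty_singleton_singleton, bstar_singleton_singleton_empty, X_mul_X_eq_monomial,
    Cmap_single_monomial, cellDeg, sub_eq_add_neg]

lemma support_single_add_single {u v : Fin n} :
    (Finsupp.single u 1 + Finsupp.single v 1 : Fin n →₀ ℕ).support = {u, v} := by
  ext i
  simp only [Finsupp.mem_support_iff, Finsupp.coe_add, Pi.add_apply, single_apply, ne_eq,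
    Nat.add_eq_zero_iff, ite_eq_right_iff, one_ne_zero, imp_false, not_and, Decidable.not_not,
    Finset.mem_insert, Finset.mem_singleton]
  omega

lemma cMono_single_add_single_of_lt {s t u v : Fin n} (hb : IsBasisCell G ({s}, {t}))
    (huv : u < v) (htv : t < v) (hadj : G.Adj u v) :
    cMono G k ({s}, {t}) (Finsupp.single u 1 + Finsupp.single v 1) =
      (X u : MvPolynomial (Fin n) k) • sym G k ({s}, {t, v})
        + if u < s then (X t : MvPolynomial (Fin n) k) • sym G k ({u, s}, {v}) else 0 := by
  have hC1 : (C1set {t} (Finsupp.single u 1 + Finsupp.single v 1)).Nonempty :=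
    ⟨v, by simp [C1set, support_single_add_single, htv]⟩
  have hmax : (C1set {t} (Finsupp.single u 1 + Finsupp.single v 1)).max' hC1 = v := by
    rw [Finset.max'_eq_iff]
    simp [C1set, support_single_add_single, htv, huv.le]
  rw [cMono, if_pos hb, dif_pos (Finset.singleton_nonempty t), if_pos (Finset.card_singleton t),
    dif_pos hC1, hmax]
  dsimp only
  rw [Finset.pair_comm v t, add_tsub_cancel_right, ← X_pow_eq_monomial, pow_one]
  by_cases hus : u < s
  · have hC3 : (C3set G {s} (Finsupp.single u 1 + Finsupp.single v 1)).Nonempty :=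
      ⟨u, by simp [C3set, support_single_add_single, hus, huv, hadj, huv.le]⟩
    have hmin : (C3set G {s} (Finsupp.single u 1 + Finsupp.single v 1)).min' hC3 = u := by
      rw [Finset.min'_eq_iff]
      simp [C3set, support_single_add_single, hus, huv, hadj, huv.le]
    rw [dif_pos hC3, hmin, if_pos hus, Finset.max'_singleton, add_right_comm,
      add_tsub_cancel_right, add_tsub_cancel_left, ← X_pow_eq_monomial, pow_one]
    simp
  · have hC3 : ¬(C3set G {s} (Finsupp.single u 1 + Finsupp.single v 1)).Nonempty := by
      simp [C3set, support_single_add_single, Finset.filter_eq_empty_iff, hus, huv.le]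
    rw [dif_neg hC3, if_neg hus]

lemma cMono_single_add_single_of_le {s t u v : Fin n} (hb : IsBasisCell G ({s}, {t}))
    (huv : u < v) (hvt : v ≤ t) (hadj : G.Adj u t) :
    cMono G k ({s}, {t}) (Finsupp.single u 1 + Finsupp.single v 1) =
      if u < s then (X v : MvPolynomial (Fin n) k) • sym G k ({u, s}, {t}) else 0 := by
  have hC1 : ¬(C1set {t} (Finsupp.single u 1 + Finsupp.single v 1)).Nonempty := by
    simp [C1set, support_single_add_single, Finset.filter_eq_empty_iff, hvt, huv.le.trans hvt]
  rw [cMono, if_pos hb, dif_pos (Finset.singleton_nonempty t), if_pos (Finset.card_singleton t),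
    dif_neg hC1]
  dsimp only
  by_cases hus : u < s
  · have hC2 : (C2set G {s} {t} (Finsupp.single u 1 + Finsupp.single v 1)).Nonempty :=
      ⟨u, by simp [C2set, support_single_add_single, hus, hadj]⟩
    have hmin : (C2set G {s} {t} (Finsupp.single u 1 + Finsupp.single v 1)).min' hC2 = u := by
      rw [Finset.min'_eq_iff]
      simp [C2set, support_single_add_single, hus, hadj, huv.le]
    rw [dif_pos hC2, hmin, if_pos hus, add_tsub_cancel_left, ← X_pow_eq_monomial, pow_one]
    simp
  · have hC2 : ¬(C2set G {s} {t} (Finsupp.single u 1 + Finsupp.single v 1)).Nonempty := by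
      have hvs : ¬v < s := fun h => hus (huv.trans h)
      simp [C2set, support_single_add_single, Finset.filter_eq_empty_iff, hus, hvs]
    rw [dif_neg hC2, if_neg hus]

lemma cigraph_adj_of_le {a b : Fin n → ℝ} (hab : ∀ i, a i ≤ b i)
    (hmono : ∀ i j : Fin n, i < j → a i ≤ a j) {s t t' : Fin n}
    (h : (cigraph n a b).Adj s t) (hst : s < t) (htt' : t ≤ t') :
    (cigraph n a b).Adj s t' := by
  have hbs : b s < a t := by
    by_contra! hle
    exact Set.not_disjoint_iff.2
      ⟨a t, Set.mem_Icc.2 ⟨hmono s t hst, hle⟩, Set.mem_Icc.2 ⟨le_rfl, hab t⟩⟩ h.2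
  have hat : a t ≤ a t' := htt'.eq_or_lt.elim (fun h => h ▸ le_rfl) (hmono t t')
  refine ⟨(hst.trans_le htt').ne, Set.disjoint_left.2 ?_⟩
  rintro x ⟨-, hx⟩ ⟨hx', -⟩
  linarith

lemma cMono_single_add_single_cigraph {a b : Fin n → ℝ} (hab : ∀ i, a i ≤ b i)
    (hmono : ∀ i j : Fin n, i < j → a i ≤ a j) {s t u v : Fin n}
    (hst : s < t) (hadj : (cigraph n a b).Adj s t)
    (huv : u < v) (hadjuv : (cigraph n a b).Adj u v) :
    cMono (cigraph n a b) k ({s}, {t}) (Finsupp.single u 1 + Finsupp.single v 1) =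
      (if t < v then (X u : MvPolynomial (Fin n) k) • sym (cigraph n a b) k ({s}, {t, v}) else 0)
        + if u < s then
            (X (min t v) : MvPolynomial (Fin n) k) • sym (cigraph n a b) k ({u, s}, {max t v})
          else 0 := by
  have hb := isBasisCell_singleton_singleton hst hadj
  by_cases htv : t < v
  · rw [cMono_single_add_single_of_lt hb huv htv hadjuv, if_pos htv, min_eq_left htv.le,
      max_eq_right htv.le]
  · have hvt := not_lt.1 htv
    rw [cMono_single_add_single_of_le hb huv hvt (cigraph_adj_of_le hab hmono hadjuv huv hvt),
      if_neg htv, zero_add, min_eq_right hvt, max_eq_left hvt]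

lemma pstar_single_single_cigraph {a b : Fin n → ℝ} (hab : ∀ i, a i ≤ b i)
    (hmono : ∀ i j : Fin n, i < j → a i ≤ a j) {s₁ t₁ s₂ t₂ : Fin n}
    (hst₁ : s₁ < t₁) (hadj₁ : (cigraph n a b).Adj s₁ t₁)
    (hst₂ : s₂ < t₂) (hadj₂ : (cigraph n a b).Adj s₂ t₂) :
    pstar (cigraph n a b) k (Finsupp.single ({s₁}, {t₁}) 1) (Finsupp.single ({s₂}, {t₂}) 1) =
      ((if t₂ < t₁ then (X s₁ : MvPolynomial (Fin n) k) • sym (cigraph n a b) k ({s₂}, {t₂, t₁})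
          else 0)
        + if s₁ < s₂ then (X (min t₂ t₁) : MvPolynomial (Fin n) k) •
            sym (cigraph n a b) k ({s₁, s₂}, {max t₂ t₁}) else 0)
      - ((if t₁ < t₂ then (X s₂ : MvPolynomial (Fin n) k) • sym (cigraph n a b) k ({s₁}, {t₁, t₂})
          else 0)
        + if s₂ < s₁ then (X (min t₁ t₂) : MvPolynomial (Fin n) k) •
            sym (cigraph n a b) k ({s₂, s₁}, {max t₁ t₂}) else 0) := by
  rw [pstar_single_single_eq_cMono_sub_cMono hst₁ hadj₁ hst₂ hadj₂,
    cMono_single_add_single_cigraph hab hmono hst₂ hadj₂ hst₁ hadj₁,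
    cMono_single_add_single_cigraph hab hmono hst₁ hadj₁ hst₂ hadj₂]

theorem stmt11_general (n : ℕ) (a b : Fin n → ℝ)
    (hab : ∀ i, a i ≤ b i) (hmono : ∀ i j : Fin n, i < j → a i ≤ a j)
    (k : Type) [Field k]
    (s₁ t₁ s₂ t₂ : Fin n)
    (hst₁ : s₁ < t₁) (hadj₁ : (cigraph n a b).Adj s₁ t₁)
    (hst₂ : s₂ < t₂) (hadj₂ : (cigraph n a b).Adj s₂ t₂) :
    (t₂ < t₁ → s₁ < s₂ →
      pstar (cigraph n a b) k (Finsupp.single (({s₁}, {t₁}) : Cell n) 1) (Finsupp.single (({s₂}, {t₂}) : Cell n) 1) =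
        Finsupp.single (({s₂}, {t₂, t₁}) : Cell n) ((X s₁ : MvPolynomial (Fin n) k))
        + Finsupp.single (({s₁, s₂}, {t₁}) : Cell n) ((X t₂ : MvPolynomial (Fin n) k))
      ∧ InB (cigraph n a b) 2 (({s₂}, {t₂, t₁}) : Cell n) ∧ InB (cigraph n a b) 2 (({s₁, s₂}, {t₁}) : Cell n))
    ∧ (t₂ < t₁ → s₁ = s₂ →
      pstar (cigraph n a b) k (Finsupp.single (({s₁}, {t₁}) : Cell n) 1) (Finsupp.single (({s₂}, {t₂}) : Cell n) 1) = Finsupp.single (({s₂}, {t₂, t₁}) : Cell n) ((X s₁ : MvPolynomial (Fin n) k))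
      ∧ InB (cigraph n a b) 2 (({s₂}, {t₂, t₁}) : Cell n))
    ∧ (t₂ < t₁ → s₂ < s₁ →
      pstar (cigraph n a b) k (Finsupp.single (({s₁}, {t₁}) : Cell n) 1) (Finsupp.single (({s₂}, {t₂}) : Cell n) 1) =
        Finsupp.single (({s₂}, {t₂, t₁}) : Cell n) ((X s₁ : MvPolynomial (Fin n) k))
        - Finsupp.single (({s₂, s₁}, {t₁}) : Cell n) ((X t₂ : MvPolynomial (Fin n) k))
      ∧ InB (cigraph n a b) 2 (({s₂}, {t₂, t₁}) : Cell n) ∧ InB (cigraph n a b) 2 (({s₂, s₁}, {t₁}) : Cell n))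
    ∧ (t₁ = t₂ → s₁ < s₂ →
      pstar (cigraph n a b) k (Finsupp.single (({s₁}, {t₁}) : Cell n) 1) (Finsupp.single (({s₂}, {t₂}) : Cell n) 1) = Finsupp.single (({s₁, s₂}, {t₂}) : Cell n) ((X t₁ : MvPolynomial (Fin n) k))
      ∧ InB (cigraph n a b) 2 (({s₁, s₂}, {t₂}) : Cell n))
    ∧ (t₁ = t₂ → s₁ = s₂ → pstar (cigraph n a b) k (Finsupp.single (({s₁}, {t₁}) : Cell n) 1) (Finsupp.single (({s₂}, {t₂}) : Cell n) 1) = 0)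
    ∧ (t₁ = t₂ → s₂ < s₁ →
      pstar (cigraph n a b) k (Finsupp.single (({s₁}, {t₁}) : Cell n) 1) (Finsupp.single (({s₂}, {t₂}) : Cell n) 1) = -Finsupp.single (({s₂, s₁}, {t₁}) : Cell n) ((X t₂ : MvPolynomial (Fin n) k))
      ∧ InB (cigraph n a b) 2 (({s₂, s₁}, {t₁}) : Cell n))
    ∧ (t₁ < t₂ → s₁ < s₂ →
      pstar (cigraph n a b) k (Finsupp.single (({s₁}, {t₁}) : Cell n) 1) (Finsupp.single (({s₂}, {t₂}) : Cell n) 1) =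
        Finsupp.single (({s₁, s₂}, {t₂}) : Cell n) ((X t₁ : MvPolynomial (Fin n) k))
        - Finsupp.single (({s₁}, {t₁, t₂}) : Cell n) ((X s₂ : MvPolynomial (Fin n) k))
      ∧ InB (cigraph n a b) 2 (({s₁, s₂}, {t₂}) : Cell n) ∧ InB (cigraph n a b) 2 (({s₁}, {t₁, t₂}) : Cell n))
    ∧ (t₁ < t₂ → s₁ = s₂ →
      pstar (cigraph n a b) k (Finsupp.single (({s₁}, {t₁}) : Cell n) 1) (Finsupp.single (({s₂}, {t₂}) : Cell n) 1) = -Finsupp.single (({s₁}, {t₁, t₂}) : Cell n) ((X s₂ : MvPolynomial (Fin n) k))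
      ∧ InB (cigraph n a b) 2 (({s₁}, {t₁, t₂}) : Cell n))
    ∧ (t₁ < t₂ → s₂ < s₁ →
      pstar (cigraph n a b) k (Finsupp.single (({s₁}, {t₁}) : Cell n) 1) (Finsupp.single (({s₂}, {t₂}) : Cell n) 1) =
        -Finsupp.single (({s₁}, {t₁, t₂}) : Cell n) ((X s₂ : MvPolynomial (Fin n) k))
        - Finsupp.single (({s₂, s₁}, {t₂}) : Cell n) ((X t₁ : MvPolynomial (Fin n) k))
      ∧ InB (cigraph n a b) 2 (({s₁}, {t₁, t₂}) : Cell n) ∧ InB (cigraph n a b) 2 (({s₂, s₁}, {t₂}) : Cell n)) := by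
  have hP := pstar_single_single_cigraph (k := k) hab hmono hst₁ hadj₁ hst₂ hadj₂
  have hup₁ : t₁ ≤ t₂ → (cigraph n a b).Adj s₁ t₂ := cigraph_adj_of_le hab hmono hadj₁ hst₁
  have hup₂ : t₂ ≤ t₁ → (cigraph n a b).Adj s₂ t₁ := cigraph_adj_of_le hab hmono hadj₂ hst₂
  refine ⟨fun ht hs => ?_, fun ht hs => ?_, fun ht hs => ?_, fun ht hs => ?_, fun ht hs => ?_,
    fun ht hs => ?_, fun ht hs => ?_, fun ht hs => ?_, fun ht hs => ?_⟩
  · have h₁ := inB_singleton_pair hst₂ ht hadj₂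
    have h₂ := inB_pair_singleton hs (hst₂.trans ht) hadj₁ (hup₂ ht.le)
    exact ⟨by simp [hP, ht, hs, ht.not_gt, hs.not_gt, min_eq_left ht.le, max_eq_right ht.le,
      smul_sym_of_isBasisCell h₁.1, smul_sym_of_isBasisCell h₂.1], h₁, h₂⟩
  · subst hs
    have h₁ := inB_singleton_pair hst₂ ht hadj₂
    exact ⟨by simp [hP, ht, ht.not_gt, smul_sym_of_isBasisCell h₁.1], h₁⟩
  · have h₁ := inB_singleton_pair hst₂ ht hadj₂
    have h₂ := inB_pair_singleton hs hst₁ (hup₂ ht.le) hadj₁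
    exact ⟨by simp [hP, ht, hs, ht.not_gt, hs.not_gt, min_eq_right ht.le, max_eq_left ht.le,
      smul_sym_of_isBasisCell h₁.1, smul_sym_of_isBasisCell h₂.1], h₁, h₂⟩
  · subst ht
    have h := inB_pair_singleton hs hst₂ hadj₁ hadj₂
    exact ⟨by simp [hP, hs, hs.not_gt, smul_sym_of_isBasisCell h.1], h⟩
  · subst ht hs
    simp [hP]
  · subst ht
    have h := inB_pair_singleton hs hst₁ hadj₂ hadj₁
    exact ⟨by simp [hP, hs, hs.not_gt, smul_sym_of_isBasisCell h.1], h⟩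
  · have h₁ := inB_pair_singleton hs hst₂ (hup₁ ht.le) hadj₂
    have h₂ := inB_singleton_pair hst₁ ht hadj₁
    exact ⟨by simp [hP, ht, hs, ht.not_gt, hs.not_gt, min_eq_right ht.le, max_eq_left ht.le,
      smul_sym_of_isBasisCell h₁.1, smul_sym_of_isBasisCell h₂.1], h₁, h₂⟩
  · subst hs
    have h := inB_singleton_pair hst₁ ht hadj₁
    exact ⟨by simp [hP, ht, ht.not_gt, smul_sym_of_isBasisCell h.1], h⟩
  · have h₁ := inB_singleton_pair hst₁ ht hadj₁
    have h₂ := inB_pair_singleton hs (hst₁.trans ht) hadj₂ (hup₁ ht.le)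
    exact ⟨by simp [hP, ht, hs, ht.not_gt, hs.not_gt, min_eq_left ht.le, max_eq_right ht.le,
      smul_sym_of_isBasisCell h₁.1, smul_sym_of_isBasisCell h₂.1, sub_eq_add_neg, add_comm], h₁, h₂⟩

theorem stmt11 (n : ℕ) (hn : 1 ≤ n) (a b : Fin n → ℝ)
    (hab : ∀ i, a i ≤ b i) (hmono : ∀ i j : Fin n, i < j → a i ≤ a j)
    (k : Type) [Field k]
    (s₁ t₁ s₂ t₂ : Fin n)
    (hst₁ : s₁ < t₁) (hadj₁ : (cigraph n a b).Adj s₁ t₁)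
    (hst₂ : s₂ < t₂) (hadj₂ : (cigraph n a b).Adj s₂ t₂) :
    (t₂ < t₁ → s₁ < s₂ →
      pstar (cigraph n a b) k (Finsupp.single (({s₁}, {t₁}) : Cell n) 1) (Finsupp.single (({s₂}, {t₂}) : Cell n) 1) =
        Finsupp.single (({s₂}, {t₂, t₁}) : Cell n) ((X s₁ : MvPolynomial (Fin n) k))
        + Finsupp.single (({s₁, s₂}, {t₁}) : Cell n) ((X t₂ : MvPolynomial (Fin n) k))
      ∧ InB (cigraph n a b) 2 (({s₂}, {t₂, t₁}) : Cell n) ∧ InB (cigraph n a b) 2 (({s₁, s₂}, {t₁}) : Cell n))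
    ∧ (t₂ < t₁ → s₁ = s₂ →
      pstar (cigraph n a b) k (Finsupp.single (({s₁}, {t₁}) : Cell n) 1) (Finsupp.single (({s₂}, {t₂}) : Cell n) 1) = Finsupp.single (({s₂}, {t₂, t₁}) : Cell n) ((X s₁ : MvPolynomial (Fin n) k))
      ∧ InB (cigraph n a b) 2 (({s₂}, {t₂, t₁}) : Cell n))
    ∧ (t₂ < t₁ → s₂ < s₁ →
      pstar (cigraph n a b) k (Finsupp.single (({s₁}, {t₁}) : Cell n) 1) (Finsupp.single (({s₂}, {t₂}) : Cell n) 1) =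
        Finsupp.single (({s₂}, {t₂, t₁}) : Cell n) ((X s₁ : MvPolynomial (Fin n) k))
        - Finsupp.single (({s₂, s₁}, {t₁}) : Cell n) ((X t₂ : MvPolynomial (Fin n) k))
      ∧ InB (cigraph n a b) 2 (({s₂}, {t₂, t₁}) : Cell n) ∧ InB (cigraph n a b) 2 (({s₂, s₁}, {t₁}) : Cell n))
    ∧ (t₁ = t₂ → s₁ < s₂ →
      pstar (cigraph n a b) k (Finsupp.single (({s₁}, {t₁}) : Cell n) 1) (Finsupp.single (({s₂}, {t₂}) : Cell n) 1) = Finsupp.single (({s₁, s₂}, {t₂}) : Cell n) ((X t₁ : MvPolynomial (Fin n) k))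
      ∧ InB (cigraph n a b) 2 (({s₁, s₂}, {t₂}) : Cell n))
    ∧ (t₁ = t₂ → s₁ = s₂ → pstar (cigraph n a b) k (Finsupp.single (({s₁}, {t₁}) : Cell n) 1) (Finsupp.single (({s₂}, {t₂}) : Cell n) 1) = 0)
    ∧ (t₁ = t₂ → s₂ < s₁ →
      pstar (cigraph n a b) k (Finsupp.single (({s₁}, {t₁}) : Cell n) 1) (Finsupp.single (({s₂}, {t₂}) : Cell n) 1) = -Finsupp.single (({s₂, s₁}, {t₁}) : Cell n) ((X t₂ : MvPolynomial (Fin n) k))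
      ∧ InB (cigraph n a b) 2 (({s₂, s₁}, {t₁}) : Cell n))
    ∧ (t₁ < t₂ → s₁ < s₂ →
      pstar (cigraph n a b) k (Finsupp.single (({s₁}, {t₁}) : Cell n) 1) (Finsupp.single (({s₂}, {t₂}) : Cell n) 1) =
        Finsupp.single (({s₁, s₂}, {t₂}) : Cell n) ((X t₁ : MvPolynomial (Fin n) k))
        - Finsupp.single (({s₁}, {t₁, t₂}) : Cell n) ((X s₂ : MvPolynomial (Fin n) k))
      ∧ InB (cigraph n a b) 2 (({s₁, s₂}, {t₂}) : Cell n) ∧ InB (cigraph n a b) 2 (({s₁}, {t₁, t₂}) : Cell n))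
    ∧ (t₁ < t₂ → s₁ = s₂ →
      pstar (cigraph n a b) k (Finsupp.single (({s₁}, {t₁}) : Cell n) 1) (Finsupp.single (({s₂}, {t₂}) : Cell n) 1) = -Finsupp.single (({s₁}, {t₁, t₂}) : Cell n) ((X s₂ : MvPolynomial (Fin n) k))
      ∧ InB (cigraph n a b) 2 (({s₁}, {t₁, t₂}) : Cell n))
    ∧ (t₁ < t₂ → s₂ < s₁ →
      pstar (cigraph n a b) k (Finsupp.single (({s₁}, {t₁}) : Cell n) 1) (Finsupp.single (({s₂}, {t₂}) : Cell n) 1) =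
        -Finsupp.single (({s₁}, {t₁, t₂}) : Cell n) ((X s₂ : MvPolynomial (Fin n) k))
        - Finsupp.single (({s₂, s₁}, {t₂}) : Cell n) ((X t₁ : MvPolynomial (Fin n) k))
      ∧ InB (cigraph n a b) 2 (({s₁}, {t₁, t₂}) : Cell n) ∧ InB (cigraph n a b) 2 (({s₂, s₁}, {t₂}) : Cell n)) :=
  stmt11_general n a b hab hmono k s₁ t₁ s₂ t₂ hst₁ hadj₁ hst₂ hadj₂

end EdgeRes
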